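/- Define the averaging operator $\mathcal{H}_1(f)(x_1, x_2) = \frac{1}{x_1}\int_0^{x_1} f(u, x_2)\,du$ on the reference triangle $T$. Then for $1 < p < \infty$ and each multi-index $\alpha \in \mathbb{N}_0^2$ and $f \in C^\infty(\bar{T})$, $\|D^\alpha \mathcal{H}_1(f)\|_{L^p(T)} \le \frac{p}{p-1}\|D^\alpha f\|_{L^p(T)}$; consequently $\mathcal{H}_1$ is bounded on $W^{m,p}(T)$ for every $m \in \mathbb{N}_0$. -/

import Mathlib

set_option maxHeartbeats 1000000

open MeasureTheory Set

/-- The open reference triangle in `ℝ²`. -/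
def refTri : Set (ℝ × ℝ) := {y : ℝ × ℝ | 0 < y.1 ∧ 0 < y.2 ∧ y.1 + y.2 < 1}

/-- Partial derivative in the first coordinate. -/
noncomputable def pderiv1 (g : ℝ × ℝ → ℝ) : ℝ × ℝ → ℝ := fun x => fderiv ℝ g x (1, 0)

/-- Partial derivative in the second coordinate. -/
noncomputable def pderiv2 (g : ℝ × ℝ → ℝ) : ℝ × ℝ → ℝ := fun x => fderiv ℝ g x (0, 1)

/-- The mixed partial derivative `D^α = ∂₁^{α₁} ∂₂^{α₂}`. -/
noncomputable def pD (a b : ℕ) (g : ℝ × ℝ → ℝ) : ℝ × ℝ → ℝ :=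
  pderiv1^[a] (pderiv2^[b] g)

/-- The Hardy averaging operator `𝓗₁(f)(x) = x₁⁻¹ ∫₀^{x₁} f(u,x₂) du`. -/
noncomputable def H1 (f : ℝ × ℝ → ℝ) : ℝ × ℝ → ℝ :=
  fun x => (1 / x.1) * ∫ u in (0 : ℝ)..x.1, f (u, x.2)

open scoped ENNReal

/-- the rescaled averaging operator -/
noncomputable def Jop (a : ℕ) (h : ℝ × ℝ → ℝ) : ℝ × ℝ → ℝ :=
  fun x => ∫ t in (0:ℝ)..1, t ^ a * h (t * x.1, x.2)

lemma contDiff_pderiv1 {h : ℝ × ℝ → ℝ} (hh : ContDiff ℝ (⊤ : ℕ∞) h) : ContDiff ℝ (⊤ : ℕ∞) (pderiv1 h) :=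
  (ContinuousLinearMap.apply ℝ ℝ ((1:ℝ),(0:ℝ))).contDiff.comp (hh.fderiv_right (by simp))

lemma contDiff_pderiv2 {h : ℝ × ℝ → ℝ} (hh : ContDiff ℝ (⊤ : ℕ∞) h) : ContDiff ℝ (⊤ : ℕ∞) (pderiv2 h) :=
  (ContinuousLinearMap.apply ℝ ℝ ((0:ℝ),(1:ℝ))).contDiff.comp (hh.fderiv_right (by simp))

lemma contDiff_pD (a b : ℕ) {f : ℝ × ℝ → ℝ} (hf : ContDiff ℝ (⊤ : ℕ∞) f) : ContDiff ℝ (⊤ : ℕ∞) (pD a b f) := by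
  have h2 : ∀ k, ContDiff ℝ (⊤ : ℕ∞) (pderiv2^[k] f) := by
    intro k; induction k with
    | zero => exact hf
    | succ k ih => rw [Function.iterate_succ_apply']; exact contDiff_pderiv2 ih
  have h1 : ∀ k (g : ℝ × ℝ → ℝ), ContDiff ℝ (⊤ : ℕ∞) g → ContDiff ℝ (⊤ : ℕ∞) (pderiv1^[k] g) := by
    intro k; induction k with
    | zero => exact fun g hg => hg
    | succ k ih => intro g hg; rw [Function.iterate_succ_apply']; exact contDiff_pderiv1 (ih g hg)
  exact h1 a _ (h2 b)

/-- The linear map `v ↦ (t * v.1, v.2)`. -/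
noncomputable def Lmap (t : ℝ) : (ℝ × ℝ) →L[ℝ] (ℝ × ℝ) :=
  t • ((ContinuousLinearMap.inl ℝ ℝ ℝ).comp (ContinuousLinearMap.fst ℝ ℝ ℝ)) +
    (ContinuousLinearMap.inr ℝ ℝ ℝ).comp (ContinuousLinearMap.snd ℝ ℝ ℝ)

lemma Lmap_apply (t : ℝ) (v : ℝ × ℝ) : Lmap t v = (t * v.1, v.2) := by
  simp [Lmap, Prod.ext_iff]

lemma Lmap_norm_le (t : ℝ) (ht : |t| ≤ 1) : ‖Lmap t‖ ≤ 1 := by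
  refine ContinuousLinearMap.opNorm_le_bound _ zero_le_one (fun v => ?_)
  rw [Lmap_apply, one_mul]
  rw [Prod.norm_def, Prod.norm_def]
  simp only [norm_mul, Real.norm_eq_abs]
  exact max_le_max (mul_le_of_le_one_left (abs_nonneg _) ht) le_rfl

lemma Lmap_cont : Continuous Lmap := by
  apply Continuous.add
  · exact (continuous_id.smul continuous_const)
  · exact continuous_const

lemma J_hasFDerivAt (a : ℕ) {h : ℝ × ℝ → ℝ} (hh : ContDiff ℝ (⊤ : ℕ∞) h) (x : ℝ × ℝ) :
    HasFDerivAt (Jop a h)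
      (∫ t in (0:ℝ)..1, (t ^ a) • ((fderiv ℝ h (t * x.1, x.2)).comp (Lmap t))) x := by
  have hcont : Continuous h := hh.continuous
  have hfd : Continuous (fderiv ℝ h) := hh.continuous_fderiv (by simp)
  -- bound for fderiv on a compact set
  obtain ⟨C, hC⟩ := (isCompact_closedBall (0 : ℝ × ℝ) (‖x‖ + 1)).exists_bound_of_continuousOn
    hfd.continuousOn
  have hC0 : 0 ≤ C := le_trans (norm_nonneg _) (hC 0 (Metric.mem_closedBall_self (by positivity)))
  have key : ∀ (t : ℝ), t ∈ Set.uIoc (0:ℝ) 1 → ∀ y ∈ Metric.ball x 1,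
      (t * y.1, y.2) ∈ Metric.closedBall (0 : ℝ × ℝ) (‖x‖ + 1) := by
    intro t ht y hy
    rw [Set.uIoc_of_le zero_le_one] at ht
    rw [Metric.mem_closedBall, dist_zero_right]
    have h1 : ‖((t * y.1, y.2) : ℝ × ℝ)‖ ≤ ‖y‖ := by
      rw [Prod.norm_def, Prod.norm_def]
      simp only [norm_mul, Real.norm_eq_abs]
      exact max_le_max (mul_le_of_le_one_left (abs_nonneg _)
        (abs_le.2 ⟨by linarith [ht.1], ht.2⟩)) le_rfl
    have h2 : ‖y‖ ≤ ‖x‖ + 1 := by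
      have := mem_ball_iff_norm.1 hy
      calc ‖y‖ = ‖x + (y - x)‖ := by ring_nf
      _ ≤ ‖x‖ + ‖y - x‖ := norm_add_le _ _
      _ ≤ ‖x‖ + 1 := by linarith
    exact h1.trans h2
  have hdiff : ∀ (t : ℝ), ∀ y : ℝ × ℝ,
      HasFDerivAt (fun z : ℝ × ℝ => t ^ a * h (t * z.1, z.2))
        ((t ^ a) • ((fderiv ℝ h (t * y.1, y.2)).comp (Lmap t))) y := by
    intro t y
    have h1 : HasFDerivAt h (fderiv ℝ h (t * y.1, y.2)) (t * y.1, y.2) :=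
      (hh.differentiable (by simp) (t * y.1, y.2)).hasFDerivAt
    have h2 : HasFDerivAt (fun z : ℝ × ℝ => (t * z.1, z.2)) (Lmap t) y := by
      have := (Lmap t).hasFDerivAt (x := y)
      apply this.congr_of_eventuallyEq
      filter_upwards with z using (Lmap_apply t z).symm ▸ rfl
    have h3 := h1.comp y (by simpa [Lmap_apply] using h2)
    have h4 := h3.const_mul (t ^ a)
    exact (by simpa [smul_smul] using h4)
  refine intervalIntegral.hasFDerivAt_integral_of_dominated_of_fderiv_le (𝕜 := ℝ)
    (F := fun (y : ℝ × ℝ) (t : ℝ) => t ^ a * h (t * y.1, y.2))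
    (F' := fun (y : ℝ × ℝ) (t : ℝ) => (t ^ a) • ((fderiv ℝ h (t * y.1, y.2)).comp (Lmap t)))
    (s := Metric.ball x 1) (bound := fun _ => C) (Metric.ball_mem_nhds x one_pos) ?_ ?_ ?_ ?_ ?_ ?_
  · filter_upwards with y
    have : Continuous fun t : ℝ => t ^ a * h (t * y.1, y.2) :=
      (continuous_pow a).mul (hcont.comp ((continuous_id.mul continuous_const).prodMk
        continuous_const))
    exact this.aestronglyMeasurable.restrict
  · have : Continuous fun t : ℝ => t ^ a * h (t * x.1, x.2) :=
      (continuous_pow a).mul (hcont.comp ((continuous_id.mul continuous_const).prodMk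
        continuous_const))
    exact this.intervalIntegrable _ _
  · have : Continuous fun t : ℝ =>
        (t ^ a) • ((fderiv ℝ h (t * x.1, x.2)).comp (Lmap t)) := by
      apply Continuous.smul (continuous_pow a)
      exact Continuous.clm_comp (hfd.comp ((continuous_id.mul continuous_const).prodMk
        continuous_const)) Lmap_cont
    exact this.aestronglyMeasurable.restrict
  · filter_upwards with t
    intro ht y hy
    have ht' : |t| ≤ 1 := by
      rw [Set.uIoc_of_le zero_le_one] at ht
      exact abs_le.2 ⟨by linarith [ht.1], ht.2⟩
    calc ‖(t ^ a) • ((fderiv ℝ h (t * y.1, y.2)).comp (Lmap t))‖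
        ≤ |t ^ a| * ‖(fderiv ℝ h (t * y.1, y.2)).comp (Lmap t)‖ := by
          simpa using norm_smul_le (t ^ a) ((fderiv ℝ h (t * y.1, y.2)).comp (Lmap t))
      _ ≤ 1 * (‖fderiv ℝ h (t * y.1, y.2)‖ * ‖Lmap t‖) := by
          apply mul_le_mul _ (ContinuousLinearMap.opNorm_comp_le _ _) (norm_nonneg _) zero_le_one
          rw [abs_pow]; exact pow_le_one₀ (abs_nonneg _) ht'
      _ ≤ 1 * (C * 1) := by
          apply mul_le_mul_of_nonneg_left _ zero_le_one
          exact mul_le_mul (hC _ (key t ht y hy)) (Lmap_norm_le t ht') (norm_nonneg _) hC0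
      _ = C := by ring
  · exact intervalIntegrable_const
  · filter_upwards with t
    intro _ y _
    exact hdiff t y

lemma J_integrable_F' (a : ℕ) {h : ℝ × ℝ → ℝ} (hh : ContDiff ℝ (⊤ : ℕ∞) h) (x : ℝ × ℝ) :
    IntervalIntegrable
      (fun t : ℝ => (t ^ a) • ((fderiv ℝ h (t * x.1, x.2)).comp (Lmap t))) volume 0 1 := by
  have hfd : Continuous (fderiv ℝ h) := hh.continuous_fderiv (by simp)
  have : Continuous fun t : ℝ =>
      (t ^ a) • ((fderiv ℝ h (t * x.1, x.2)).comp (Lmap t)) := by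
    apply Continuous.smul (continuous_pow a)
    exact Continuous.clm_comp (hfd.comp ((continuous_id.mul continuous_const).prodMk
      continuous_const)) Lmap_cont
  exact this.intervalIntegrable _ _

lemma pderiv1_J (a : ℕ) {h : ℝ × ℝ → ℝ} (hh : ContDiff ℝ (⊤ : ℕ∞) h) :
    pderiv1 (Jop a h) = Jop (a + 1) (pderiv1 h) := by
  funext x
  have H := J_hasFDerivAt a hh x
  have : pderiv1 (Jop a h) x = (∫ t in (0:ℝ)..1,
      (t ^ a) • ((fderiv ℝ h (t * x.1, x.2)).comp (Lmap t))) (1, 0) := by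
    rw [pderiv1, H.fderiv]
  rw [this, ContinuousLinearMap.intervalIntegral_apply (J_integrable_F' a hh x)]
  apply intervalIntegral.integral_congr
  intro t _
  simp only [ContinuousLinearMap.smul_apply, ContinuousLinearMap.comp_apply, Lmap_apply]
  have : ((t * 1, 0) : ℝ × ℝ) = t • ((1 : ℝ), (0 : ℝ)) := by simp [Prod.ext_iff]
  rw [this, (fderiv ℝ h (t * x.1, x.2)).map_smul]
  show t ^ a • (t • pderiv1 h (t * x.1, x.2)) = t ^ (a + 1) * pderiv1 h (t * x.1, x.2)
  simp [smul_smul, pow_succ, mul_comm, mul_assoc, mul_left_comm]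

lemma pderiv2_J (a : ℕ) {h : ℝ × ℝ → ℝ} (hh : ContDiff ℝ (⊤ : ℕ∞) h) :
    pderiv2 (Jop a h) = Jop a (pderiv2 h) := by
  funext x
  have H := J_hasFDerivAt a hh x
  have : pderiv2 (Jop a h) x = (∫ t in (0:ℝ)..1,
      (t ^ a) • ((fderiv ℝ h (t * x.1, x.2)).comp (Lmap t))) (0, 1) := by
    rw [pderiv2, H.fderiv]
  rw [this, ContinuousLinearMap.intervalIntegral_apply (J_integrable_F' a hh x)]
  apply intervalIntegral.integral_congr
  intro t _
  simp only [ContinuousLinearMap.smul_apply, ContinuousLinearMap.comp_apply, Lmap_apply]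
  have : ((t * 0, 1) : ℝ × ℝ) = ((0 : ℝ), (1 : ℝ)) := by simp
  rw [this]
  show t ^ a • (pderiv2 h (t * x.1, x.2)) = t ^ a * pderiv2 h (t * x.1, x.2)
  simp

lemma pD_J (a b : ℕ) {f : ℝ × ℝ → ℝ} (hf : ContDiff ℝ (⊤ : ℕ∞) f) :
    pD a b (Jop 0 f) = Jop a (pD a b f) := by
  have hiter2 : ∀ k, ContDiff ℝ (⊤ : ℕ∞) (pderiv2^[k] f) := by
    intro k; induction k with
    | zero => exact hf
    | succ k ih => rw [Function.iterate_succ_apply']; exact contDiff_pderiv2 ih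
  have h2 : ∀ k, pderiv2^[k] (Jop 0 f) = Jop 0 (pderiv2^[k] f) := by
    intro k; induction k with
    | zero => rfl
    | succ k ih =>
        rw [Function.iterate_succ_apply', Function.iterate_succ_apply', ih,
          pderiv2_J 0 (hiter2 k)]
  have h1 : ∀ (k c : ℕ) (g : ℝ × ℝ → ℝ), ContDiff ℝ (⊤ : ℕ∞) g →
      pderiv1^[k] (Jop c g) = Jop (c + k) (pderiv1^[k] g) := by
    intro k; induction k with
    | zero => intro c g _; simp
    | succ k ih =>
        intro c g hg
        have hiter1 : ∀ j, ContDiff ℝ (⊤ : ℕ∞) (pderiv1^[j] g) := by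
          intro j; induction j with
          | zero => exact hg
          | succ j ihj => rw [Function.iterate_succ_apply']; exact contDiff_pderiv1 ihj
        rw [Function.iterate_succ_apply', Function.iterate_succ_apply', ih c g hg,
          pderiv1_J (c + k) (hiter1 k), Nat.add_assoc]
  rw [pD, h2 b, h1 a 0 _ (hiter2 b), pD, Nat.zero_add]

lemma eqOn_pderiv1 {g₁ g₂ : ℝ × ℝ → ℝ} {U : Set (ℝ × ℝ)} (hU : IsOpen U)
    (hg : Set.EqOn g₁ g₂ U) : Set.EqOn (pderiv1 g₁) (pderiv1 g₂) U := by
  intro x hx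
  have : g₁ =ᶠ[nhds x] g₂ := hg.eventuallyEq_of_mem (hU.mem_nhds hx)
  simp only [pderiv1, this.fderiv_eq]

lemma eqOn_pderiv2 {g₁ g₂ : ℝ × ℝ → ℝ} {U : Set (ℝ × ℝ)} (hU : IsOpen U)
    (hg : Set.EqOn g₁ g₂ U) : Set.EqOn (pderiv2 g₁) (pderiv2 g₂) U := by
  intro x hx
  have : g₁ =ᶠ[nhds x] g₂ := hg.eventuallyEq_of_mem (hU.mem_nhds hx)
  simp only [pderiv2, this.fderiv_eq]

lemma eqOn_pD (a b : ℕ) {g₁ g₂ : ℝ × ℝ → ℝ} {U : Set (ℝ × ℝ)} (hU : IsOpen U)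
    (hg : Set.EqOn g₁ g₂ U) : Set.EqOn (pD a b g₁) (pD a b g₂) U := by
  have h2 : ∀ k, Set.EqOn (pderiv2^[k] g₁) (pderiv2^[k] g₂) U := by
    intro k; induction k with
    | zero => exact hg
    | succ k ih =>
        rw [Function.iterate_succ_apply', Function.iterate_succ_apply']
        exact eqOn_pderiv2 hU ih
  have h1 : ∀ k {h₁ h₂ : ℝ × ℝ → ℝ}, Set.EqOn h₁ h₂ U →
      Set.EqOn (pderiv1^[k] h₁) (pderiv1^[k] h₂) U := by
    intro k; induction k with
    | zero => exact fun h => h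
    | succ k ih =>
        intro h₁ h₂ hh
        rw [Function.iterate_succ_apply', Function.iterate_succ_apply']
        exact eqOn_pderiv1 hU (ih hh)
  exact h1 a (h2 b)

lemma isOpen_ne_zero : IsOpen {x : ℝ × ℝ | x.1 ≠ 0} :=
  isOpen_ne.preimage continuous_fst

lemma H1_eq_J {f : ℝ × ℝ → ℝ} (hf : Continuous f) :
    Set.EqOn (H1 f) (Jop 0 f) {x : ℝ × ℝ | x.1 ≠ 0} := by
  intro x hx
  have hx1 : x.1 ≠ 0 := hx
  simp only [H1, Jop, pow_zero, one_mul]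
  have := intervalIntegral.integral_comp_mul_left (fun u => f (u, x.2)) hx1 (a := 0) (b := 1)
  simp only [mul_zero, mul_one] at this
  have h2 : (∫ t in (0:ℝ)..1, f (t * x.1, x.2)) = ∫ t in (0:ℝ)..1, f (x.1 * t, x.2) := by
    apply intervalIntegral.integral_congr; intro t _; simp [mul_comm]
  rw [h2, this, smul_eq_mul, one_div]

/-- The main representation: on the set `x₁ ≠ 0`,
`D^α (H1 f) = Jop a (D^α f)`. -/
lemma pD_H1_eq (a b : ℕ) {f : ℝ × ℝ → ℝ} (hf : ContDiff ℝ (⊤ : ℕ∞) f) :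
    Set.EqOn (pD a b (H1 f)) (Jop a (pD a b f)) {x : ℝ × ℝ | x.1 ≠ 0} := by
  intro x hx
  rw [eqOn_pD a b isOpen_ne_zero (H1_eq_J hf.continuous) hx, pD_J a b hf]

/-- Pointwise bound for `Jop`. -/
lemma J_bound' (a : ℕ) {h : ℝ × ℝ → ℝ} (hcont : Continuous h) (x : ℝ × ℝ) :
    |Jop a h x| ≤ ∫ t in (0:ℝ)..1, |h (t * x.1, x.2)| := by
  have hc1 : Continuous fun t : ℝ => h (t * x.1, x.2) :=
    hcont.comp ((continuous_id.mul continuous_const).prodMk continuous_const)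
  have step1 : |Jop a h x| ≤ ∫ t in (0:ℝ)..1, |t ^ a * h (t * x.1, x.2)| :=
    intervalIntegral.abs_integral_le_integral_abs zero_le_one
  have step2 : (∫ t in (0:ℝ)..1, |t ^ a * h (t * x.1, x.2)|)
      ≤ ∫ t in (0:ℝ)..1, |h (t * x.1, x.2)| := by
    apply intervalIntegral.integral_mono_on zero_le_one
    · exact (((continuous_pow a).mul hc1).abs).intervalIntegrable _ _
    · exact (hc1.abs).intervalIntegrable _ _
    · intro t ht
      rw [abs_mul]
      apply mul_le_of_le_one_left (abs_nonneg _)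
      rw [abs_pow]
      exact pow_le_one₀ (abs_nonneg _) (abs_le.2 ⟨by linarith [ht.1], ht.2⟩)
  linarith

/-- Substitution formula for the averaged absolute value. -/
lemma avg_subst {h : ℝ × ℝ → ℝ} {x1 x2 : ℝ} (hx : 0 < x1) :
    (∫ t in (0:ℝ)..1, |h (t * x1, x2)|) = x1⁻¹ * ∫ u in (0:ℝ)..x1, |h (u, x2)| := by
  have := intervalIntegral.integral_comp_mul_left (fun u => |h (u, x2)|) (ne_of_gt hx)
    (a := 0) (b := 1)
  simp only [mul_zero, mul_one] at this
  have h2 : (∫ t in (0:ℝ)..1, |h (t * x1, x2)|)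
      = ∫ t in (0:ℝ)..1, |h (x1 * t, x2)| := by
    apply intervalIntegral.integral_congr; intro t _; simp [mul_comm]
  rw [h2, this, smul_eq_mul]

/-- Continuity of the parametric average. -/
lemma cont_avg {h : ℝ × ℝ → ℝ} (hc : Continuous h) :
    Continuous fun x : ℝ × ℝ => ∫ t in (0:ℝ)..1, |h (t * x.1, x.2)| := by
  rw [continuous_iff_continuousAt]
  intro x₀
  have heq : (fun x : ℝ × ℝ => ∫ t in (0:ℝ)..1, |h (t * x.1, x.2)|)
      = fun x => ∫ t, |h (t * x.1, x.2)| ∂(volume.restrict (Set.Ioc (0:ℝ) 1)) := by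
    funext x
    rw [intervalIntegral.integral_of_le zero_le_one]
  rw [heq]
  obtain ⟨C, hC⟩ := (isCompact_closedBall (0 : ℝ × ℝ) (‖x₀‖ + 1)).exists_bound_of_continuousOn
    hc.continuousOn
  have hkey : ∀ t ∈ Set.Ioc (0:ℝ) 1, ∀ x ∈ Metric.ball x₀ 1,
      ((t * x.1, x.2) : ℝ × ℝ) ∈ Metric.closedBall (0 : ℝ × ℝ) (‖x₀‖ + 1) := by
    intro t ht x hx
    rw [Metric.mem_closedBall, dist_zero_right]
    have h1 : ‖((t * x.1, x.2) : ℝ × ℝ)‖ ≤ ‖x‖ := by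
      rw [Prod.norm_def, Prod.norm_def]
      simp only [norm_mul, Real.norm_eq_abs]
      exact max_le_max (mul_le_of_le_one_left (abs_nonneg _)
        (abs_le.2 ⟨by linarith [ht.1], ht.2⟩)) le_rfl
    have h2 : ‖x‖ ≤ ‖x₀‖ + 1 := by
      have := mem_ball_iff_norm.1 hx
      calc ‖x‖ = ‖x₀ + (x - x₀)‖ := by ring_nf
      _ ≤ ‖x₀‖ + ‖x - x₀‖ := norm_add_le _ _
      _ ≤ ‖x₀‖ + 1 := by linarith
    exact h1.trans h2
  apply continuousAt_of_dominated (bound := fun _ => C)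
  · filter_upwards with x
    exact ((hc.comp ((continuous_id.mul continuous_const).prodMk
      continuous_const)).abs.aestronglyMeasurable).restrict
  · filter_upwards [Metric.ball_mem_nhds x₀ one_pos] with x hx
    refine (ae_restrict_iff' measurableSet_Ioc).2 (ae_of_all _ fun t ht => ?_)
    rw [Real.norm_eq_abs, abs_abs]
    have := hC _ (hkey t ht x hx)
    simpa using this
  · exact integrableOn_const measure_Ioc_lt_top.ne
  · refine ae_of_all _ fun t => ?_
    exact ((hc.comp ((continuous_const.mul continuous_fst).prodMk
      continuous_snd)).abs).continuousAt

lemma lintegral_rpow_Ioo {r : ℝ} (hr : -1 < r) {x : ℝ} (hx : 0 ≤ x) :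
    ∫⁻ u in Ioo (0:ℝ) x, (ENNReal.ofReal u) ^ r = ENNReal.ofReal (x ^ (r+1) / (r+1)) := by
  have h1 : ∫⁻ u in Ioo (0:ℝ) x, (ENNReal.ofReal u) ^ r
      = ∫⁻ u in Ioo (0:ℝ) x, ENNReal.ofReal (u ^ r) := by
    refine setLIntegral_congr_fun measurableSet_Ioo (fun u hu => ?_)
    exact ENNReal.ofReal_rpow_of_pos hu.1
  have hint : IntegrableOn (fun u : ℝ => u ^ r) (Ioo 0 x) volume :=
    (intervalIntegrable_iff_integrableOn_Ioo_of_le hx).1 (intervalIntegral.intervalIntegrable_rpow' hr)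
  have h2 : ENNReal.ofReal (∫ u in Ioo (0:ℝ) x, u ^ r)
      = ∫⁻ u in Ioo (0:ℝ) x, ENNReal.ofReal (u ^ r) := by
    refine ofReal_integral_eq_lintegral_ofReal hint ?_
    refine (ae_restrict_iff' measurableSet_Ioo).2 (ae_of_all _ fun u hu => ?_)
    exact Real.rpow_nonneg hu.1.le _
  have h3 : (∫ u in Ioo (0:ℝ) x, u ^ r) = x ^ (r+1) / (r+1) := by
    rw [← integral_Ioc_eq_integral_Ioo, ← intervalIntegral.integral_of_le hx,
      integral_rpow (Or.inl hr), Real.zero_rpow (by linarith), sub_zero]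
  rw [h1, ← h2, h3]

lemma lintegral_rpow_Ioo_tail {r : ℝ} (hr : r < -1) {u L : ℝ} (hu : 0 < u) :
    ∫⁻ x in Ioo u L, (ENNReal.ofReal x) ^ r ≤ ENNReal.ofReal (u ^ (r+1) / (-(r+1))) := by
  rcases le_or_gt L u with hL | hL
  · rw [Ioo_eq_empty (by intro h; exact absurd (h.trans_le hL) (lt_irrefl u))]
    simp
  · have h1 : ∫⁻ x in Ioo u L, (ENNReal.ofReal x) ^ r
        = ∫⁻ x in Ioo u L, ENNReal.ofReal (x ^ r) := by
      refine setLIntegral_congr_fun measurableSet_Ioo (fun x hx => ?_)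
      exact ENNReal.ofReal_rpow_of_pos (hu.trans hx.1)
    have h0 : (0:ℝ) ∉ uIcc u L := by
      rw [uIcc_of_le hL.le]
      intro h
      exact absurd h.1 (not_le.2 hu)
    have hint : IntegrableOn (fun x : ℝ => x ^ r) (Ioo u L) volume :=
      (intervalIntegrable_iff_integrableOn_Ioo_of_le hL.le).1
        (intervalIntegral.intervalIntegrable_rpow (Or.inr h0))
    have h2 : ENNReal.ofReal (∫ x in Ioo u L, x ^ r)
        = ∫⁻ x in Ioo u L, ENNReal.ofReal (x ^ r) := by
      refine ofReal_integral_eq_lintegral_ofReal hint ?_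
      refine (ae_restrict_iff' measurableSet_Ioo).2 (ae_of_all _ fun x hx => ?_)
      exact Real.rpow_nonneg (hu.trans hx.1).le _
    have h3 : (∫ x in Ioo u L, x ^ r) = (L ^ (r+1) - u ^ (r+1)) / (r+1) := by
      rw [← integral_Ioc_eq_integral_Ioo, ← intervalIntegral.integral_of_le hL.le,
        integral_rpow (Or.inr ⟨by linarith, h0⟩)]
    rw [h1, ← h2, h3]
    apply ENNReal.ofReal_le_ofReal
    have e1 : (L ^ (r+1) - u ^ (r+1)) / (r+1) = (u ^ (r+1) - L ^ (r+1)) / (-(r+1)) := by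
      rw [← neg_div_neg_eq]; ring_nf
    rw [e1]
    gcongr
    · linarith
    · exact sub_le_self _ (Real.rpow_nonneg (hu.trans hL).le _)

lemma hardy_alg {p q : ℝ} (hp : 1 < p) (hq : q = p/(p-1)) (X Q Wx : ℝ≥0∞)
    (hX0 : X ≠ 0) (hXt : X ≠ ⊤) :
    (X⁻¹ * (Wx ^ (1/p) * (X ^ (1/q) * Q) ^ (1/q))) ^ p
      = Q ^ (p-1) * (X ^ (1/p - 2) * Wx) := by
  have hp0 : 0 < p := by linarith
  have hp1 : p - 1 ≠ 0 := by linarith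
  have hq0 : 0 < q := by rw [hq]; exact div_pos (by linarith) (by linarith)
  have e1 : X⁻¹ = X ^ (-1 : ℝ) := (ENNReal.rpow_neg_one X).symm
  rw [e1, ENNReal.mul_rpow_of_nonneg (X ^ (1/q)) Q (one_div_nonneg.2 hq0.le),
    ← ENNReal.rpow_mul X (1/q) (1/q),
    ENNReal.mul_rpow_of_nonneg _ _ hp0.le, ENNReal.mul_rpow_of_nonneg _ _ hp0.le,
    ENNReal.mul_rpow_of_nonneg _ _ hp0.le,
    ← ENNReal.rpow_mul X (-1) p, ← ENNReal.rpow_mul Wx (1/p) p,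
    ← ENNReal.rpow_mul X (1/q*(1/q)) p, ← ENNReal.rpow_mul Q (1/q) p,
    show (1/p)*p = (1:ℝ) by field_simp, ENNReal.rpow_one,
    show ((1/q)*p : ℝ) = p - 1 by rw [hq]; field_simp]
  have hmerge : X ^ ((-1:ℝ)*p) * (Wx * (X ^ (1/q*(1/q)*p) * Q ^ (p-1)))
      = (X ^ ((-1:ℝ)*p) * X ^ (1/q*(1/q)*p)) * (Q ^ (p-1) * Wx) := by ring
  rw [hmerge, ← ENNReal.rpow_add _ _ hX0 hXt,
    show ((-1:ℝ)*p + 1/q*(1/q)*p) = 1/p - 2 by rw [hq]; field_simp; ring]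
  ring

lemma hardy1D (p : ℝ) (hp : 1 < p) (L : ℝ) {g : ℝ → ℝ} (hg : Continuous g) :
    ∫⁻ x in Ioo (0:ℝ) L, ENNReal.ofReal ((x⁻¹ * ∫ u in (0:ℝ)..x, |g u|) ^ p)
      ≤ ENNReal.ofReal ((p/(p-1))^p) * ∫⁻ x in Ioo (0:ℝ) L, ENNReal.ofReal (|g x| ^ p) := by
  set q : ℝ := p / (p - 1) with hqdef
  have hpq : p.HolderConjugate q := by
    simpa [Real.conjExponent] using Real.HolderConjugate.conjExponent hp
  have hp0 : 0 < p := by linarith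
  have hq1 : 1 < q := hpq.symm.lt
  have hq0 : 0 < q := by linarith
  have hpq1 : 1/p + 1/q = 1 := by
    simpa [one_div] using hpq.inv_add_inv_eq_one
  set G : ℝ → ℝ≥0∞ := fun u => ENNReal.ofReal |g u| with hGdef
  have hGm : Measurable G := ENNReal.measurable_ofReal.comp hg.abs.measurable
  have hGfin : ∀ u, G u ≠ ⊤ := fun u => ENNReal.ofReal_ne_top
  set ψ : ℝ → ℝ≥0∞ := fun u => G u ^ p * (ENNReal.ofReal u) ^ (1/q) with hψdef
  have hψm : Measurable ψ := by
    apply Measurable.mul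
    · exact hGm.pow_const _
    · exact (ENNReal.measurable_ofReal.comp measurable_id).pow_const _
  have hψfin : ∀ u, ψ u ≠ ⊤ := by
    intro u
    exact ENNReal.mul_ne_top (ENNReal.rpow_ne_top_of_nonneg hp0.le (hGfin u))
      (ENNReal.rpow_ne_top_of_nonneg (one_div_nonneg.2 hq0.le) ENNReal.ofReal_ne_top)
  set W : ℝ → ℝ≥0∞ := fun x => ∫⁻ u in Ioo (0:ℝ) x, ψ u with hWdef
  set e : ℝ := 1/p - 2 with hedef
  set Q : ℝ≥0∞ := ENNReal.ofReal q with hQdef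
  have hQ0 : Q ≠ 0 := by simp [hQdef, ENNReal.ofReal_eq_zero, not_le, hq0]
  have hQt : Q ≠ ⊤ := ENNReal.ofReal_ne_top
  -- pointwise bound on the set
  have pointwise : ∀ x ∈ Ioo (0:ℝ) L,
      ENNReal.ofReal ((x⁻¹ * ∫ u in (0:ℝ)..x, |g u|) ^ p)
        ≤ Q ^ (p-1) * ((ENNReal.ofReal x) ^ e * W x) := by
    intro x hx
    have hx0 : 0 < x := hx.1
    set X : ℝ≥0∞ := ENNReal.ofReal x with hXdef
    have hX0 : X ≠ 0 := by simp [hXdef, ENNReal.ofReal_eq_zero, not_le, hx0]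
    have hXt : X ≠ ⊤ := ENNReal.ofReal_ne_top
    set I : ℝ := ∫ u in (0:ℝ)..x, |g u| with hIdef
    have hI0 : 0 ≤ I := intervalIntegral.integral_nonneg hx0.le (fun u _ => abs_nonneg _)
    set Φ : ℝ≥0∞ := ∫⁻ u in Ioo (0:ℝ) x, G u with hΦdef
    have hIΦ : ENNReal.ofReal I = Φ := by
      have hint : IntegrableOn (fun u : ℝ => |g u|) (Ioo 0 x) volume :=
        (intervalIntegrable_iff_integrableOn_Ioo_of_le hx0.le).1
          (hg.abs.intervalIntegrable _ _)
      have h' : I = ∫ u in Ioo (0:ℝ) x, |g u| := by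
        rw [hIdef, intervalIntegral.integral_of_le hx0.le, integral_Ioc_eq_integral_Ioo]
      rw [h']
      exact ofReal_integral_eq_lintegral_ofReal hint (ae_of_all _ fun u => abs_nonneg _)
    have lhs_eq : ENNReal.ofReal ((x⁻¹ * I) ^ p) = (X⁻¹ * Φ) ^ p := by
      rw [← ENNReal.ofReal_rpow_of_nonneg (by positivity) hp0.le, ENNReal.ofReal_mul
        (by positivity), ENNReal.ofReal_inv_of_pos hx0, hIΦ]
    -- Hölder
    have holder : Φ ≤ (W x) ^ (1/p) *
        (∫⁻ u in Ioo (0:ℝ) x, (ENNReal.ofReal u) ^ (-(1/p))) ^ (1/q) := by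
      have hsplit : Φ = ∫⁻ u in Ioo (0:ℝ) x,
          ((fun u => G u * (ENNReal.ofReal u) ^ (1/(p*q))) *
           (fun u => (ENNReal.ofReal u) ^ (-(1/(p*q))))) u := by
        refine setLIntegral_congr_fun measurableSet_Ioo (fun u hu => ?_)
        have hu0 : ENNReal.ofReal u ≠ 0 := by
          simp [ENNReal.ofReal_eq_zero, not_le, hu.1]
        show G u = _ * _
        rw [mul_assoc, ← ENNReal.rpow_add _ _ hu0 ENNReal.ofReal_ne_top]
        simp
      rw [hsplit]
      have hHo := ENNReal.lintegral_mul_le_Lp_mul_Lq (volume.restrict (Ioo (0:ℝ) x)) hpq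
        (f := fun u => G u * (ENNReal.ofReal u) ^ (1/(p*q)))
        (g := fun u => (ENNReal.ofReal u) ^ (-(1/(p*q))))
        ((hGm.mul ((ENNReal.measurable_ofReal.comp measurable_id).pow_const _)).aemeasurable)
        (((ENNReal.measurable_ofReal.comp measurable_id).pow_const _).aemeasurable)
      have fac1 : (∫⁻ u in Ioo (0:ℝ) x, (G u * (ENNReal.ofReal u) ^ (1/(p*q))) ^ p)
          = W x := by
        refine setLIntegral_congr_fun measurableSet_Ioo (fun u hu => ?_)
        rw [ENNReal.mul_rpow_of_nonneg _ _ hp0.le, ← ENNReal.rpow_mul]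
        show G u ^ p * _ = G u ^ p * _
        congr 2
        field_simp
      have fac2 : (∫⁻ u in Ioo (0:ℝ) x, ((ENNReal.ofReal u) ^ (-(1/(p*q)))) ^ q)
          = ∫⁻ u in Ioo (0:ℝ) x, (ENNReal.ofReal u) ^ (-(1/p)) := by
        refine setLIntegral_congr_fun measurableSet_Ioo (fun u hu => ?_)
        rw [← ENNReal.rpow_mul]
        congr 1
        field_simp
      apply le_trans hHo
      apply le_of_eq
      beta_reduce
      rw [fac1, fac2]
    -- compute the second factor
    have hsecond : (∫⁻ u in Ioo (0:ℝ) x, (ENNReal.ofReal u) ^ (-(1/p)))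
        = X ^ (1/q) * Q := by
      have hr : (-1 : ℝ) < -(1/p) := by
        rw [neg_lt_neg_iff, div_lt_one hp0]
        exact hp
      rw [lintegral_rpow_Ioo hr hx0.le, show (-(1/p) + 1 : ℝ) = 1/q by linarith,
        div_eq_mul_inv, show ((1:ℝ)/q)⁻¹ = q by field_simp,
        ENNReal.ofReal_mul (Real.rpow_nonneg hx0.le _), ← ENNReal.ofReal_rpow_of_pos hx0]
    have key : (X⁻¹ * Φ) ^ p ≤ Q ^ (p-1) * (X ^ e * W x) := by
      calc (X⁻¹ * Φ) ^ p ≤ (X⁻¹ * ((W x) ^ (1/p) * (X ^ (1/q) * Q) ^ (1/q))) ^ p := by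
            apply ENNReal.rpow_le_rpow _ hp0.le
            exact mul_le_mul_right (hsecond ▸ holder) _
        _ = Q ^ (p-1) * (X ^ e * W x) := hardy_alg hp hqdef X Q (W x) hX0 hXt
    rw [lhs_eq]
    exact key
  -- integrate the pointwise bound
  have step1 : ∫⁻ x in Ioo (0:ℝ) L, ENNReal.ofReal ((x⁻¹ * ∫ u in (0:ℝ)..x, |g u|) ^ p)
      ≤ Q ^ (p-1) * ∫⁻ x in Ioo (0:ℝ) L, (ENNReal.ofReal x) ^ e * W x := by
    rw [← lintegral_const_mul' _ _ (ENNReal.rpow_ne_top_of_nonneg (by linarith) hQt)]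
    exact lintegral_mono_ae ((ae_restrict_iff' measurableSet_Ioo).2 (ae_of_all _ pointwise))
  -- the core Tonelli computation
  have he1 : e < -1 := by
    rw [hedef]
    have : 1/p < 1 := by rw [div_lt_one hp0]; exact hp
    linarith
  have hee : e + 1 = -(1/q) := by
    rw [hedef]; linarith
  have core : (∫⁻ x in Ioo (0:ℝ) L, (ENNReal.ofReal x) ^ e * W x)
      ≤ Q * ∫⁻ u in Ioo (0:ℝ) L, G u ^ p := by
    -- rewrite as a double integral
    have hXefin : ∀ x : ℝ, 0 < x → (ENNReal.ofReal x) ^ e ≠ ⊤ := by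
      intro x hx
      rw [ENNReal.ofReal_rpow_of_pos hx]
      exact ENNReal.ofReal_ne_top
    have rewrite1 : (∫⁻ x in Ioo (0:ℝ) L, (ENNReal.ofReal x) ^ e * W x)
        = ∫⁻ x in Ioo (0:ℝ) L, ∫⁻ u in Ioo (0:ℝ) L,
            (Iio x).indicator (fun u => (ENNReal.ofReal x) ^ e * ψ u) u := by
      refine setLIntegral_congr_fun measurableSet_Ioo (fun x hx => ?_)
      rw [lintegral_indicator measurableSet_Iio, Measure.restrict_restrict measurableSet_Iio,
        show (Iio x ∩ Ioo (0:ℝ) L) = Ioo (0:ℝ) x by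
          ext u
          simp only [mem_inter_iff, mem_Iio, mem_Ioo]
          exact ⟨fun h => ⟨h.2.1, h.1⟩, fun h => ⟨h.2, h.1, h.2.trans hx.2⟩⟩,
        lintegral_const_mul' _ _ (hXefin x hx.1)]
    have swap : (∫⁻ x in Ioo (0:ℝ) L, ∫⁻ u in Ioo (0:ℝ) L,
            (Iio x).indicator (fun u => (ENNReal.ofReal x) ^ e * ψ u) u)
        = ∫⁻ u in Ioo (0:ℝ) L, ∫⁻ x in Ioo (0:ℝ) L,
            (Iio x).indicator (fun u => (ENNReal.ofReal x) ^ e * ψ u) u := by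
      apply lintegral_lintegral_swap
      have huncurry : (Function.uncurry fun (x u : ℝ) =>
          (Iio x).indicator (fun u => (ENNReal.ofReal x) ^ e * ψ u) u)
          = ({z : ℝ × ℝ | z.2 < z.1}).indicator
              (fun z => (ENNReal.ofReal z.1) ^ e * ψ z.2) := by
        funext z
        rcases z with ⟨x, u⟩
        by_cases h : u < x <;>
          simp [Function.uncurry, Set.indicator, h]
      rw [huncurry]
      exact ((((ENNReal.measurable_ofReal.comp measurable_fst).pow_const e).mul
        (hψm.comp measurable_snd)).indicator
        (measurableSet_lt measurable_snd measurable_fst)).aemeasurable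
    have inner_bound : ∀ u ∈ Ioo (0:ℝ) L,
        (∫⁻ x in Ioo (0:ℝ) L,
            (Iio x).indicator (fun u => (ENNReal.ofReal x) ^ e * ψ u) u)
          ≤ Q * G u ^ p := by
      intro u hu
      have hu0 : ENNReal.ofReal u ≠ 0 := by
        simp [ENNReal.ofReal_eq_zero, not_le, hu.1]
      have e2 : (∫⁻ x in Ioo (0:ℝ) L,
          (Iio x).indicator (fun u => (ENNReal.ofReal x) ^ e * ψ u) u)
          = (∫⁻ x in Ioo u L, (ENNReal.ofReal x) ^ e) * ψ u := by
        have e3 : ∀ x : ℝ, (Iio x).indicator (fun u => (ENNReal.ofReal x) ^ e * ψ u) u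
            = (Ioi u).indicator (fun x => (ENNReal.ofReal x) ^ e * ψ u) x := by
          intro x
          by_cases h : u < x <;> simp [Set.indicator, h]
        simp_rw [e3]
        rw [lintegral_indicator measurableSet_Ioi, Measure.restrict_restrict measurableSet_Ioi,
          show (Ioi u ∩ Ioo (0:ℝ) L) = Ioo u L by
            ext x
            simp only [mem_inter_iff, mem_Ioi, mem_Ioo]
            exact ⟨fun h => ⟨h.1, h.2.2⟩, fun h => ⟨h.1, hu.1.trans h.1, h.2⟩⟩,
          lintegral_mul_const' _ _ (hψfin u)]
      rw [e2]
      calc (∫⁻ x in Ioo u L, (ENNReal.ofReal x) ^ e) * ψ u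
          ≤ ENNReal.ofReal (u ^ (e+1) / (-(e+1))) * ψ u :=
            mul_le_mul_left (lintegral_rpow_Ioo_tail he1 hu.1) _
        _ = Q * G u ^ p := by
            rw [hee, neg_neg, div_eq_mul_inv, show ((1:ℝ)/q)⁻¹ = q by field_simp,
              ENNReal.ofReal_mul (Real.rpow_nonneg hu.1.le _),
              ← ENNReal.ofReal_rpow_of_pos hu.1]
            show (ENNReal.ofReal u) ^ (-(1/q)) * Q * (G u ^ p * (ENNReal.ofReal u) ^ (1/q))
              = Q * G u ^ p
            have : (ENNReal.ofReal u) ^ (-(1/q)) * (ENNReal.ofReal u) ^ (1/q) = 1 := by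
              rw [← ENNReal.rpow_add _ _ hu0 ENNReal.ofReal_ne_top]
              simp
            calc (ENNReal.ofReal u) ^ (-(1/q)) * Q * (G u ^ p * (ENNReal.ofReal u) ^ (1/q))
                = ((ENNReal.ofReal u) ^ (-(1/q)) * (ENNReal.ofReal u) ^ (1/q)) *
                    (Q * G u ^ p) := by ring
              _ = Q * G u ^ p := by rw [this, one_mul]
    calc (∫⁻ x in Ioo (0:ℝ) L, (ENNReal.ofReal x) ^ e * W x)
        = ∫⁻ u in Ioo (0:ℝ) L, ∫⁻ x in Ioo (0:ℝ) L,
            (Iio x).indicator (fun u => (ENNReal.ofReal x) ^ e * ψ u) u := by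
          rw [rewrite1, swap]
      _ ≤ ∫⁻ u in Ioo (0:ℝ) L, Q * G u ^ p :=
          lintegral_mono_ae ((ae_restrict_iff' measurableSet_Ioo).2 (ae_of_all _ inner_bound))
      _ = Q * ∫⁻ u in Ioo (0:ℝ) L, G u ^ p := lintegral_const_mul' _ _ hQt
  -- put everything together
  have final : Q ^ (p-1) * (Q * ∫⁻ u in Ioo (0:ℝ) L, G u ^ p)
      = ENNReal.ofReal ((p/(p-1))^p) * ∫⁻ x in Ioo (0:ℝ) L, ENNReal.ofReal (|g x| ^ p) := by
    have e4 : Q ^ (p-1) * Q = Q ^ p := by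
      rw [← ENNReal.rpow_one Q, ← ENNReal.rpow_mul, one_mul, ← ENNReal.rpow_add _ _ hQ0 hQt]
      norm_num
    have e5 : (∫⁻ u in Ioo (0:ℝ) L, G u ^ p) = ∫⁻ x in Ioo (0:ℝ) L,
        ENNReal.ofReal (|g x| ^ p) := by
      refine setLIntegral_congr_fun measurableSet_Ioo (fun u hu => ?_)
      exact ENNReal.ofReal_rpow_of_nonneg (abs_nonneg _) hp0.le
    rw [← mul_assoc, e4, e5, hQdef, ENNReal.ofReal_rpow_of_pos hq0]
  calc ∫⁻ x in Ioo (0:ℝ) L, ENNReal.ofReal ((x⁻¹ * ∫ u in (0:ℝ)..x, |g u|) ^ p)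
      ≤ Q ^ (p-1) * ∫⁻ x in Ioo (0:ℝ) L, (ENNReal.ofReal x) ^ e * W x := step1
    _ ≤ Q ^ (p-1) * (Q * ∫⁻ u in Ioo (0:ℝ) L, G u ^ p) := mul_le_mul_right core _
    _ = _ := final

lemma isOpen_refTri : IsOpen refTri := by
  have h : refTri = ({y : ℝ × ℝ | 0 < y.1} ∩ ({y : ℝ × ℝ | 0 < y.2} ∩
      {y : ℝ × ℝ | y.1 + y.2 < 1})) := rfl
  rw [h]
  exact (isOpen_lt continuous_const continuous_fst).inter
    ((isOpen_lt continuous_const continuous_snd).inter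
      (isOpen_lt (continuous_fst.add continuous_snd) continuous_const))

lemma tri_lintegral (Ψ : ℝ × ℝ → ℝ≥0∞) (hΨ : Measurable Ψ) :
    ∫⁻ x in refTri, Ψ x
      = ∫⁻ x2 in Ioo (0:ℝ) 1, ∫⁻ x1 in Ioo (0:ℝ) (1 - x2), Ψ (x1, x2) := by
  have hmeas : MeasurableSet refTri := isOpen_refTri.measurableSet
  rw [← lintegral_indicator hmeas, Measure.volume_eq_prod,
    lintegral_prod_symm _ (hΨ.indicator hmeas).aemeasurable]
  have pointeq : ∀ x2 : ℝ, (∫⁻ x1, refTri.indicator Ψ (x1, x2))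
      = (Ioo (0:ℝ) 1).indicator
          (fun b => ∫⁻ x1, (Ioo (0:ℝ) (1-b)).indicator (fun a => Ψ (a, b)) x1) x2 := by
    intro x2
    by_cases h : x2 ∈ Ioo (0:ℝ) 1
    · rw [Set.indicator_of_mem h]
      refine lintegral_congr fun x1 => ?_
      by_cases h1 : x1 ∈ Ioo (0:ℝ) (1 - x2)
      · rw [Set.indicator_of_mem h1, Set.indicator_of_mem]
        exact ⟨h1.1, h.1, by have := h1.2; simp only [mem_Ioo] at h1 ⊢; linarith⟩
      · rw [Set.indicator_of_notMem h1, Set.indicator_of_notMem]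
        intro hmem
        refine h1 ⟨hmem.1, ?_⟩
        have h2 := hmem.2.2
        linarith
    · rw [Set.indicator_of_notMem h]
      have hz : ∀ x1 : ℝ, refTri.indicator Ψ (x1, x2) = 0 := by
        intro x1
        rw [Set.indicator_of_notMem]
        intro hmem
        refine h ⟨hmem.2.1, ?_⟩
        have h1 := hmem.1
        have h2 := hmem.2.2
        linarith
      simp only [hz, lintegral_zero]
  simp_rw [pointeq]
  rw [lintegral_indicator measurableSet_Ioo]
  refine setLIntegral_congr_fun measurableSet_Ioo (fun b _ => ?_)
  rw [lintegral_indicator measurableSet_Ioo]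

/-- Hardy-inequality bound for the averaging operator `𝓗₁` on the reference
triangle: each partial derivative of `𝓗₁ f` is bounded in `L^p(T)` by the
corresponding derivative of `f`, with constant `p/(p-1)`; consequently `𝓗₁` is
bounded on `W^{m,p}(T)` for every `m`. -/
theorem stmt12 (p : ℝ) (hp : 1 < p) (f : ℝ × ℝ → ℝ) (hf : ContDiff ℝ (⊤ : ℕ∞) f) :
    (∀ a b : ℕ,
      (∫⁻ x in refTri, ENNReal.ofReal (|pD a b (H1 f) x| ^ p))
        ≤ ENNReal.ofReal ((p / (p - 1)) ^ p) *
            ∫⁻ x in refTri, ENNReal.ofReal (|pD a b f x| ^ p)) ∧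
    ∀ m : ℕ,
      (∑ a ∈ Finset.range (m + 1), ∑ b ∈ Finset.range (m + 1 - a),
          ∫⁻ x in refTri, ENNReal.ofReal (|pD a b (H1 f) x| ^ p))
        ≤ ENNReal.ofReal ((p / (p - 1)) ^ p) *
            ∑ a ∈ Finset.range (m + 1), ∑ b ∈ Finset.range (m + 1 - a),
              ∫⁻ x in refTri, ENNReal.ofReal (|pD a b f x| ^ p) := by
  have hp0 : 0 < p := by linarith
  have part1 : ∀ a b : ℕ,
      (∫⁻ x in refTri, ENNReal.ofReal (|pD a b (H1 f) x| ^ p))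
        ≤ ENNReal.ofReal ((p / (p - 1)) ^ p) *
            ∫⁻ x in refTri, ENNReal.ofReal (|pD a b f x| ^ p) := by
    intro a b
    have hD : ContDiff ℝ (⊤ : ℕ∞) (pD a b f) := contDiff_pD a b hf
    have hDc : Continuous (pD a b f) := hD.continuous
    set C : ℝ≥0∞ := ENNReal.ofReal ((p / (p - 1)) ^ p) with hCdef
    have hCt : C ≠ ⊤ := ENNReal.ofReal_ne_top
    set JA : ℝ × ℝ → ℝ := fun x => ∫ t in (0:ℝ)..1, |pD a b f (t * x.1, x.2)| with hJAdef
    have hJAc : Continuous JA := cont_avg hDc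
    have hJAnn : ∀ x, 0 ≤ JA x :=
      fun x => intervalIntegral.integral_nonneg zero_le_one (fun t _ => abs_nonneg _)
    set Ψ₀ : ℝ × ℝ → ℝ≥0∞ := fun x => ENNReal.ofReal (JA x ^ p) with hΨ₀def
    have hΨ₀m : Measurable Ψ₀ :=
      ENNReal.measurable_ofReal.comp
        ((hJAc.rpow_const (fun x => Or.inr hp0.le)).measurable)
    set Ψ₂ : ℝ × ℝ → ℝ≥0∞ := fun x => ENNReal.ofReal (|pD a b f x| ^ p) with hΨ₂def
    have hΨ₂m : Measurable Ψ₂ :=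
      ENNReal.measurable_ofReal.comp
        ((hDc.abs.rpow_const (fun x => Or.inr hp0.le)).measurable)
    -- Step A : pointwise bound on the triangle
    have stepA : (∫⁻ x in refTri, ENNReal.ofReal (|pD a b (H1 f) x| ^ p))
        ≤ ∫⁻ x in refTri, Ψ₀ x := by
      refine lintegral_mono_ae ((ae_restrict_iff' isOpen_refTri.measurableSet).2
        (ae_of_all _ fun x hx => ?_))
      have hx1 : x.1 ≠ 0 := ne_of_gt hx.1
      have hrepr : pD a b (H1 f) x = Jop a (pD a b f) x := pD_H1_eq a b hf hx1
      have hb : |pD a b (H1 f) x| ≤ JA x := by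
        rw [hrepr]
        exact J_bound' a hDc x
      exact ENNReal.ofReal_le_ofReal
        (Real.rpow_le_rpow (abs_nonneg _) hb hp0.le)
    -- Step B : Fubini for Ψ₀
    have stepB : (∫⁻ x in refTri, Ψ₀ x)
        = ∫⁻ x2 in Ioo (0:ℝ) 1, ∫⁻ x1 in Ioo (0:ℝ) (1 - x2), Ψ₀ (x1, x2) :=
      tri_lintegral Ψ₀ hΨ₀m
    -- Step C : Hardy inequality in each slice
    have stepC : ∀ x2 ∈ Ioo (0:ℝ) 1,
        (∫⁻ x1 in Ioo (0:ℝ) (1 - x2), Ψ₀ (x1, x2))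
          ≤ C * ∫⁻ x1 in Ioo (0:ℝ) (1 - x2), Ψ₂ (x1, x2) := by
      intro x2 _
      have hgc : Continuous fun u : ℝ => pD a b f (u, x2) :=
        hDc.comp (continuous_id.prodMk continuous_const)
      have hcongr : (∫⁻ x1 in Ioo (0:ℝ) (1 - x2), Ψ₀ (x1, x2))
          = ∫⁻ x1 in Ioo (0:ℝ) (1 - x2),
              ENNReal.ofReal ((x1⁻¹ * ∫ u in (0:ℝ)..x1, |pD a b f (u, x2)|) ^ p) := by
        refine setLIntegral_congr_fun measurableSet_Ioo (fun x1 hx1 => ?_)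
        show ENNReal.ofReal (JA (x1, x2) ^ p) = _
        rw [hJAdef]
        simp only
        rw [avg_subst hx1.1]
      rw [hcongr]
      exact hardy1D p hp (1 - x2) hgc
    -- combine
    calc (∫⁻ x in refTri, ENNReal.ofReal (|pD a b (H1 f) x| ^ p))
        ≤ ∫⁻ x in refTri, Ψ₀ x := stepA
      _ = ∫⁻ x2 in Ioo (0:ℝ) 1, ∫⁻ x1 in Ioo (0:ℝ) (1 - x2), Ψ₀ (x1, x2) := stepB
      _ ≤ ∫⁻ x2 in Ioo (0:ℝ) 1, C * ∫⁻ x1 in Ioo (0:ℝ) (1 - x2), Ψ₂ (x1, x2) :=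
          lintegral_mono_ae ((ae_restrict_iff' measurableSet_Ioo).2 (ae_of_all _ stepC))
      _ = C * ∫⁻ x2 in Ioo (0:ℝ) 1, ∫⁻ x1 in Ioo (0:ℝ) (1 - x2), Ψ₂ (x1, x2) :=
          lintegral_const_mul' _ _ hCt
      _ = C * ∫⁻ x in refTri, ENNReal.ofReal (|pD a b f x| ^ p) := by
          rw [← tri_lintegral Ψ₂ hΨ₂m]
  refine ⟨part1, fun m => ?_⟩
  calc (∑ a ∈ Finset.range (m + 1), ∑ b ∈ Finset.range (m + 1 - a),
          ∫⁻ x in refTri, ENNReal.ofReal (|pD a b (H1 f) x| ^ p))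
      ≤ ∑ a ∈ Finset.range (m + 1), ∑ b ∈ Finset.range (m + 1 - a),
          ENNReal.ofReal ((p / (p - 1)) ^ p) *
            ∫⁻ x in refTri, ENNReal.ofReal (|pD a b f x| ^ p) :=
        Finset.sum_le_sum fun a _ => Finset.sum_le_sum fun b _ => part1 a b
    _ = _ := by
        simp_rw [← Finset.mul_sum]
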